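/- Fix L ≥ 1, probabilities p_1,…,p_L and a mean μ > 0 with κ ≥ L+1, and let H = H(μ,p_L). If z̃_H ≤ e^{−2/(L+1)}, then for every F ∈ F(μ,p_L) one has g_F(z̃_F) ≥ g_H(z̃_H), i.e., ξ_F ≤ ξ_H; moreover H ∈ F(μ,p_L), so the supremum over F ∈ F(μ,p_L) of ξ_F equals ξ_H. -/

import Mathlib

open scoped BigOperators
/-- A degree distribution: a sequence of nonnegative probabilities on the positive
integers summing to one, with finite mean and `p 2 ≠ 1`. -/
structure DegreeDist where
  p : ℕ → ℝ
  nonneg : ∀ d, 0 ≤ p d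
  zero : p 0 = 0
  psummable : Summable p
  sum_one : ∑' d : ℕ, p d = 1
  mean_summable : Summable fun d : ℕ => (d : ℝ) * p d
  two_ne_one : p 2 ≠ 1

/-- The mean `μ_F` of a degree distribution. -/
noncomputable def mu (F : DegreeDist) : ℝ := ∑' d : ℕ, (d : ℝ) * F.p d

/-- The probability generating function `g_F`. -/
noncomputable def pgf (F : DegreeDist) (s : ℝ) : ℝ := ∑' d : ℕ, F.p d * s ^ d

/-- The derivative `g_F'` of the probability generating function. -/
noncomputable def pgfD (F : DegreeDist) (s : ℝ) : ℝ := ∑' d : ℕ, (d : ℝ) * F.p d * s ^ (d - 1)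

/-- `z` is the smallest `s ∈ [0,1]` with `m * s = g_F'(s)`.  Taking `m = mu F` gives `z̃_F`;
taking `m = μ` gives `z̃_F^{(μ)}`. -/
def IsSmallestRoot (F : DegreeDist) (m z : ℝ) : Prop :=
  z ∈ Set.Icc (0 : ℝ) 1 ∧ m * z = pgfD F z ∧
    ∀ s ∈ Set.Icc (0 : ℝ) 1, m * s = pgfD F s → z ≤ s

/-- Membership in the class `F(p_L)`: the first `L` probabilities agree with `p`. -/
def MemF (L : ℕ) (p : ℕ → ℝ) (F : DegreeDist) : Prop :=
  ∀ d, 1 ≤ d → d ≤ L → F.p d = p d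

/-- The remaining mass `p_{>L} = 1 - ∑_{i=1}^L p_i`. -/
noncomputable def pGt (L : ℕ) (p : ℕ → ℝ) : ℝ := 1 - ∑ i ∈ Finset.Icc 1 L, p i

/-- The distribution `G = G(p_L)`: all remaining mass at `L+1`. -/
def IsG (L : ℕ) (p : ℕ → ℝ) (G : DegreeDist) : Prop :=
  (∀ d, 1 ≤ d → d ≤ L → G.p d = p d) ∧
  G.p (L + 1) = pGt L p ∧
  ∀ d, L + 1 < d → G.p d = 0

/-- `κ = (μ - ∑_{d=1}^L d p_d) / p_{>L}`. -/
noncomputable def kappa (L : ℕ) (p : ℕ → ℝ) (μ : ℝ) : ℝ :=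
  (μ - ∑ d ∈ Finset.Icc 1 L, (d : ℝ) * p d) / pGt L p

/-- `r_m = (κ - (L+1)) / (m - (L+1))`. -/
noncomputable def rmass (L : ℕ) (κ : ℝ) (m : ℕ) : ℝ :=
  (κ - ((L : ℝ) + 1)) / ((m : ℝ) - ((L : ℝ) + 1))

/-- The distribution `G_m`: mass `(1-r_m) p_{>L}` at `L+1` and `r_m p_{>L}` at `m`. -/
def IsGm (L : ℕ) (p : ℕ → ℝ) (μ : ℝ) (m : ℕ) (Gm : DegreeDist) : Prop :=
  (∀ d, 1 ≤ d → d ≤ L → Gm.p d = p d) ∧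
  Gm.p (L + 1) = (1 - rmass L (kappa L p μ) m) * pGt L p ∧
  Gm.p m = rmass L (kappa L p μ) m * pGt L p ∧
  ∀ d, L + 1 < d → d ≠ m → Gm.p d = 0

/-- The distribution `H = H(μ, p_L)`: remaining mass at `⌊κ⌋` and `⌊κ⌋+1`, preserving mean `μ`. -/
def IsH (L : ℕ) (p : ℕ → ℝ) (μ : ℝ) (H : DegreeDist) : Prop :=
  (∀ d, 1 ≤ d → d ≤ L → H.p d = p d) ∧
  H.p ⌊kappa L p μ⌋₊ = ((⌊kappa L p μ⌋₊ : ℝ) + 1 - kappa L p μ) * pGt L p ∧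
  H.p (⌊kappa L p μ⌋₊ + 1) = (kappa L p μ - (⌊kappa L p μ⌋₊ : ℝ)) * pGt L p ∧
  ∀ d, L < d → d ≠ ⌊kappa L p μ⌋₊ → d ≠ ⌊kappa L p μ⌋₊ + 1 → H.p d = 0

/-!
Both `g_F` and `g_F'` are sums `∑ F_d u_d` with `u_d = s^d` and `u_d = d s^(d-1)`. For
`d ≥ L + 1` these sequences are discretely convex (the second one because
`s ≤ e^(-2/(L+1)) ≤ (L+1)/(L+3)`), so they lie above their secant through `⌊κ⌋` and
`⌊κ⌋ + 1`. All distributions of `F(μ, p_L)` agree below `L` and integrate affine functions of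
`d` alike, while `H` puts its tail mass exactly where the secant meets the sequence: hence
`g_H ≤ g_F` on `[0,1]` and `g_H' ≤ g_F'` on `[0, e^(-2/(L+1))]`. The second inequality and the
intermediate value theorem give `z̃_H ≤ z̃_F`, and then `g_H(z̃_H) ≤ g_F(z̃_H) ≤ g_F(z̃_F)`.
-/

open Finset

lemma secant_le_of_increment_monotone {u : ℕ → ℝ} {k a d : ℕ}
    (hu : ∀ j, k ≤ j → u (j + 1) - u j ≤ u (j + 2) - u (j + 1)) (ha : k ≤ a)
    (hd : k ≤ d) :
    u a + (u (a + 1) - u a) * ((d : ℝ) - a) ≤ u d := by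
  set Δ : ℕ → ℝ := fun j => u (j + 1) - u j
  have hΔ : MonotoneOn Δ {j | k ≤ j} := monotoneOn_nat_Ici_of_le_succ hu
  set g : ℕ → ℝ := fun n => u n - (u a + Δ a * ((n : ℝ) - a))
  have hstep (n : ℕ) : g (n + 1) - g n = Δ n - Δ a := by
    simp only [g, Δ]; push_cast; ring
  suffices g a ≤ g d by simpa [g] using this
  rcases le_total a d with had | hda
  · refine monotoneOn_nat_Ici_of_le_succ (f := g) (fun n hn => ?_)
      (show a ≤ a from le_rfl) had had
    linarith [hstep n, hΔ ha (ha.trans hn) hn]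
  · refine antitoneOn_of_add_one_le (f := g) Set.ordConnected_Icc (fun n _ hn hn1 => ?_)
      ⟨hd, hda⟩ ⟨ha, le_rfl⟩ hda
    linarith [hstep n, hΔ hn.1 ha (Nat.le_of_succ_le hn1.2)]

lemma pow_increment_monotone {s : ℝ} (hs : 0 ≤ s) (j : ℕ) :
    s ^ (j + 1) - s ^ j ≤ s ^ (j + 2) - s ^ (j + 1) := by
  have : 0 ≤ s ^ j * (1 - s) ^ 2 := by positivity
  nlinarith [pow_succ s j, pow_succ s (j + 1)]

-- The second difference of `j s^(j-1)` is `s^(j-1) (1 - s) (j - (j + 2) s)`.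
lemma mul_pow_sub_one_increment_monotone {L : ℕ} {s : ℝ} (hs : 0 ≤ s)
    (hsL : ((L : ℝ) + 3) * s ≤ L + 1) (j : ℕ) (hj : L + 1 ≤ j) :
    ((j + 1 : ℕ) : ℝ) * s ^ (j + 1 - 1) - j * s ^ (j - 1) ≤
      ((j + 2 : ℕ) : ℝ) * s ^ (j + 2 - 1) - ((j + 1 : ℕ) : ℝ) * s ^ (j + 1 - 1) := by
  obtain ⟨m, rfl⟩ : ∃ m, j = m + 1 := ⟨j - 1, by omega⟩
  have hLm : (L : ℝ) ≤ m := by exact_mod_cast (by omega : L ≤ m)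
  have hms : ((m : ℝ) + 3) * s ≤ m + 1 := by nlinarith
  have : 0 ≤ s ^ m * ((1 - s) * ((m + 1) - (m + 3) * s)) :=
    mul_nonneg (pow_nonneg hs m) (mul_nonneg (by nlinarith) (by linarith))
  simp only [Nat.add_sub_cancel, show m + 1 + 2 - 1 = m + 2 by omega]
  push_cast
  nlinarith [pow_succ s m, pow_succ s (m + 1)]

lemma Real.exp_neg_two_div_mul_le {x : ℝ} (hx : 0 < x) : exp (-(2 / x)) * (x + 2) ≤ x := by
  rw [exp_neg, inv_mul_le_iff₀ (exp_pos _)]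
  calc x + 2 = (2 / x + 1) * x := by field_simp; ring
    _ ≤ exp (2 / x) * x := by gcongr; exact add_one_le_exp _

namespace DegreeDist

variable (F : DegreeDist)

lemma summable_mul_pow {s : ℝ} (hs0 : 0 ≤ s) (hs1 : s ≤ 1) :
    Summable fun d => F.p d * s ^ d :=
  Summable.of_nonneg_of_le (fun d => mul_nonneg (F.nonneg d) (pow_nonneg hs0 d))
    (fun d => mul_le_of_le_one_right (F.nonneg d) (pow_le_one₀ hs0 hs1)) F.psummable

lemma norm_pgfD_term_le {s : ℝ} (hs0 : 0 ≤ s) (hs1 : s ≤ 1) (d : ℕ) :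
    ‖(d : ℝ) * F.p d * s ^ (d - 1)‖ ≤ d * F.p d := by
  rw [Real.norm_of_nonneg (by have := F.nonneg d; positivity)]
  exact mul_le_of_le_one_right (by have := F.nonneg d; positivity) (pow_le_one₀ hs0 hs1)

lemma summable_pgfD_term {s : ℝ} (hs0 : 0 ≤ s) (hs1 : s ≤ 1) :
    Summable fun d => F.p d * ((d : ℝ) * s ^ (d - 1)) :=
  Summable.of_norm_bounded F.mean_summable fun d => by
    rw [mul_left_comm, ← mul_assoc]; exact F.norm_pgfD_term_le hs0 hs1 d

lemma pgfD_eq_tsum (s : ℝ) : pgfD F s = ∑' d, F.p d * ((d : ℝ) * s ^ (d - 1)) :=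
  tsum_congr fun d => by ring

lemma pgfD_nonneg {s : ℝ} (hs : 0 ≤ s) : 0 ≤ pgfD F s :=
  tsum_nonneg fun d => by have := F.nonneg d; positivity

lemma continuousOn_pgfD : ContinuousOn (pgfD F) (Set.Icc 0 1) :=
  continuousOn_tsum (fun d => by fun_prop) F.mean_summable
    fun d _ hs => F.norm_pgfD_term_le hs.1 hs.2 d

lemma pgf_mono {x y : ℝ} (hx : 0 ≤ x) (hxy : x ≤ y) (hy : y ≤ 1) : pgf F x ≤ pgf F y :=
  Summable.tsum_le_tsum
    (fun d => mul_le_mul_of_nonneg_left (pow_le_pow_left₀ hx hxy d) (F.nonneg d))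
    (F.summable_mul_pow hx (hxy.trans hy)) (F.summable_mul_pow (hx.trans hxy) hy)

lemma summable_mul_sub_affine {u : ℕ → ℝ} (hu : Summable fun d => F.p d * u d) (A B : ℝ) :
    Summable fun d => F.p d * (u d - (A + B * d)) :=
  (hu.sub ((F.psummable.mul_left A).add (F.mean_summable.mul_left B))).congr fun d => by ring

lemma tsum_mul_eq_affine_add {u : ℕ → ℝ} (hu : Summable fun d => F.p d * u d) (A B : ℝ) :
    ∑' d, F.p d * u d = A + B * mu F + ∑' d, F.p d * (u d - (A + B * d)) := by
  have hA : Summable fun d => A * F.p d := F.psummable.mul_left A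
  have hB : Summable fun d : ℕ => B * ((d : ℝ) * F.p d) := F.mean_summable.mul_left B
  have hsplit : (fun d => F.p d * u d) =
      fun d => A * F.p d + B * ((d : ℝ) * F.p d) + F.p d * (u d - (A + B * d)) := by
    funext d; ring
  rw [hsplit, (hA.add hB).tsum_add (F.summable_mul_sub_affine hu A B), hA.tsum_add hB,
    tsum_mul_left, tsum_mul_left, F.sum_one, mu, mul_one]

end DegreeDist

open DegreeDist

/-- Members of `F(p_L)` with equal means integrate affine functions of `d` alike. -/
lemma tsum_mul_le_of_affine_minorant {L : ℕ} {p : ℕ → ℝ} {F G : DegreeDist}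
    (hF : MemF L p F) (hG : MemF L p G) (hmu : mu G = mu F) {u : ℕ → ℝ}
    (huF : Summable fun d => F.p d * u d) (huG : Summable fun d => G.p d * u d) {A B : ℝ}
    (hle : ∀ d, L < d → A + B * d ≤ u d)
    (hcontact : ∀ d, L < d → G.p d ≠ 0 → u d = A + B * d) :
    ∑' d, G.p d * u d ≤ ∑' d, F.p d * u d := by
  have hgap (d : ℕ) (hd : d ∉ Icc 1 L) : d = 0 ∨ L < d := by
    rw [mem_Icc] at hd; omega
  have hG_tail : ∑' d, G.p d * (u d - (A + B * d)) =
      ∑ d ∈ Icc 1 L, G.p d * (u d - (A + B * d)) := by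
    refine tsum_eq_sum fun d hd => ?_
    rcases hgap d hd with rfl | hLd
    · simp [G.zero]
    · by_cases h : G.p d = 0
      · simp [h]
      · simp [hcontact d hLd h]
  have hF_tail : ∑ d ∈ Icc 1 L, F.p d * (u d - (A + B * d)) ≤
      ∑' d, F.p d * (u d - (A + B * d)) := by
    refine Summable.sum_le_tsum _ (fun d hd => ?_) (F.summable_mul_sub_affine huF A B)
    rcases hgap d hd with rfl | hLd
    · simp [F.zero]
    · exact mul_nonneg (F.nonneg d) (sub_nonneg.mpr (hle d hLd))
  have hagree : ∑ d ∈ Icc 1 L, G.p d * (u d - (A + B * d)) =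
      ∑ d ∈ Icc 1 L, F.p d * (u d - (A + B * d)) := by
    refine sum_congr rfl fun d hd => ?_
    rw [mem_Icc] at hd
    rw [hG d hd.1 hd.2, hF d hd.1 hd.2]
  rw [G.tsum_mul_eq_affine_add huG A B, F.tsum_mul_eq_affine_add huF A B, hmu, hG_tail, hagree]
  linarith

namespace IsH

variable {L : ℕ} {p : ℕ → ℝ} {μ : ℝ} {H : DegreeDist}

lemma tsum_mul_eq (hH : IsH L p μ H) (ha : L + 1 ≤ ⌊kappa L p μ⌋₊) (f : ℕ → ℝ) :
    ∑' d, H.p d * f d = ∑ d ∈ Icc 1 L, p d * f d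
      + ((⌊kappa L p μ⌋₊ : ℝ) + 1 - kappa L p μ) * pGt L p * f ⌊kappa L p μ⌋₊
      + (kappa L p μ - ⌊kappa L p μ⌋₊) * pGt L p * f (⌊kappa L p μ⌋₊ + 1) := by
  set a := ⌊kappa L p μ⌋₊
  have hsupp : ∀ d ∉ insert a (insert (a + 1) (Icc 1 L)), H.p d * f d = 0 := by
    intro d hd
    simp only [mem_insert, mem_Icc, not_or] at hd
    rcases Nat.eq_zero_or_pos d with rfl | hd0
    · simp [H.zero]
    · rw [hH.2.2.2 d (by omega) hd.1 hd.2.1, zero_mul]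
  have hIcc : ∑ d ∈ Icc 1 L, H.p d * f d = ∑ d ∈ Icc 1 L, p d * f d := by
    refine sum_congr rfl fun d hd => ?_
    rw [mem_Icc] at hd
    rw [hH.1 d hd.1 hd.2]
  rw [tsum_eq_sum hsupp, sum_insert (by simp only [mem_insert, mem_Icc]; omega),
    sum_insert (by simp only [mem_Icc]; omega), hIcc, hH.2.1, hH.2.2.1]
  ring

lemma mu_eq (hH : IsH L p μ H) (ha : L + 1 ≤ ⌊kappa L p μ⌋₊) (hP : pGt L p ≠ 0) :
    mu H = μ := by
  have hκ : kappa L p μ * pGt L p = μ - ∑ d ∈ Icc 1 L, (d : ℝ) * p d :=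
    div_mul_cancel₀ _ hP
  rw [mu, tsum_congr fun d => mul_comm _ _, hH.tsum_mul_eq ha]
  push_cast
  simp only [mul_comm (p _)] at hκ ⊢
  linear_combination hκ

lemma tsum_mul_le (hH : IsH L p μ H) (ha : L + 1 ≤ ⌊kappa L p μ⌋₊) {F : DegreeDist}
    (hF : MemF L p F) (hmu : mu H = mu F) {u : ℕ → ℝ}
    (hconv : ∀ j, L + 1 ≤ j → u (j + 1) - u j ≤ u (j + 2) - u (j + 1))
    (huF : Summable fun d => F.p d * u d) (huH : Summable fun d => H.p d * u d) :
    ∑' d, H.p d * u d ≤ ∑' d, F.p d * u d := by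
  set a := ⌊kappa L p μ⌋₊
  set B := u (a + 1) - u a
  refine tsum_mul_le_of_affine_minorant hF hH.1 hmu huF huH (A := u a - B * a) (B := B)
    (fun d hd => ?_) (fun d hd hHd => ?_)
  · have := secant_le_of_increment_monotone hconv ha (hd : L + 1 ≤ d)
    linarith
  · have : d = a ∨ d = a + 1 := by
      by_contra! h
      exact hHd (hH.2.2.2 d hd h.1 h.2)
    rcases this with rfl | rfl
    · ring
    · push_cast; ring

lemma pgf_le (hH : IsH L p μ H) (ha : L + 1 ≤ ⌊kappa L p μ⌋₊) {F : DegreeDist}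
    (hF : MemF L p F) (hmu : mu H = mu F) {s : ℝ} (hs0 : 0 ≤ s) (hs1 : s ≤ 1) :
    pgf H s ≤ pgf F s :=
  hH.tsum_mul_le ha hF hmu (fun j _ => pow_increment_monotone hs0 j)
    (F.summable_mul_pow hs0 hs1) (H.summable_mul_pow hs0 hs1)

lemma pgfD_le (hH : IsH L p μ H) (ha : L + 1 ≤ ⌊kappa L p μ⌋₊) {F : DegreeDist}
    (hF : MemF L p F) (hmu : mu H = mu F) {s : ℝ} (hs0 : 0 ≤ s)
    (hsL : ((L : ℝ) + 3) * s ≤ L + 1) :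
    pgfD H s ≤ pgfD F s := by
  have hs1 : s ≤ 1 := by nlinarith
  rw [pgfD_eq_tsum, pgfD_eq_tsum]
  exact hH.tsum_mul_le ha hF hmu (mul_pow_sub_one_increment_monotone hs0 hsL)
    (F.summable_pgfD_term hs0 hs1) (H.summable_pgfD_term hs0 hs1)

end IsH

lemma IsSmallestRoot.le_of_pgfD_le {F : DegreeDist} {m z s : ℝ} (hz : IsSmallestRoot F m z)
    (hs : s ∈ Set.Icc (0 : ℝ) 1) (hFs : pgfD F s ≤ m * s) : z ≤ s := by
  have hcont : ContinuousOn (fun x => pgfD F x - m * x) (Set.Icc 0 s) :=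
    (F.continuousOn_pgfD.mono (Set.Icc_subset_Icc_right hs.2)).sub (by fun_prop)
  obtain ⟨r, hr, hroot : pgfD F r - m * r = 0⟩ := intermediate_value_Icc' hs.1 hcont
    (show (0 : ℝ) ∈ Set.Icc _ _ from ⟨by linarith, by simpa using F.pgfD_nonneg le_rfl⟩)
  exact (hz.2.2 r ⟨hr.1, hr.2.trans hs.2⟩ (by linarith)).trans hr.2

theorem tail_does_not_determine_giant_stmt14_general
    (L : ℕ) (p : ℕ → ℝ)
    (hplt : ∑ i ∈ Finset.Icc 1 L, p i < 1)
    (μ : ℝ) (hκ : (L : ℝ) + 1 ≤ kappa L p μ)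
    (H : DegreeDist) (hH : IsH L p μ H)
    (zH : ℝ) (hzH : IsSmallestRoot H (mu H) zH)
    (hcond : zH ≤ Real.exp (-(2 / ((L : ℝ) + 1)))) :
    (∀ F : DegreeDist, MemF L p F → mu F = μ →
      ∀ zF : ℝ, IsSmallestRoot F (mu F) zF → pgf H zH ≤ pgf F zF) ∧
    MemF L p H ∧ mu H = μ ∧
    sSup {x : ℝ | ∃ F : DegreeDist, MemF L p F ∧ mu F = μ ∧
        ∃ zF, IsSmallestRoot F (mu F) zF ∧ x = 1 - pgf F zF} =
      1 - pgf H zH := by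
  have ha : L + 1 ≤ ⌊kappa L p μ⌋₊ := Nat.le_floor (by push_cast; exact hκ)
  have hμH : mu H = μ := hH.mu_eq ha (by unfold pGt; linarith)
  have hexp := Real.exp_neg_two_div_mul_le (by positivity : (0 : ℝ) < L + 1)
  have key (F : DegreeDist) (hF : MemF L p F) (hFμ : mu F = μ) (zF : ℝ)
      (hzF : IsSmallestRoot F (mu F) zF) : pgf H zH ≤ pgf F zF := by
    have hle : zH ≤ zF := by
      refine le_of_not_gt fun hlt => ?_
      have hsL : ((L : ℝ) + 3) * zF ≤ L + 1 := by nlinarith [hzF.1.1]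
      have := hzH.le_of_pgfD_le hzF.1 <| calc
        pgfD H zF ≤ pgfD F zF := hH.pgfD_le ha hF (hμH.trans hFμ.symm) hzF.1.1 hsL
        _ = mu H * zF := by rw [← hzF.2.1, hμH, hFμ]
      linarith
    calc pgf H zH ≤ pgf F zH := hH.pgf_le ha hF (hμH.trans hFμ.symm) hzH.1.1 hzH.1.2
      _ ≤ pgf F zF := F.pgf_mono hzH.1.1 hle hzF.1.2
  refine ⟨key, hH.1, hμH, IsGreatest.csSup_eq ⟨⟨H, hH.1, hμH, zH, hzH, rfl⟩, ?_⟩⟩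
  rintro _ ⟨F, hF, hFμ, zF, hzF, rfl⟩
  linarith [key F hF hFμ zF hzF]

/-- If `κ ≥ L+1` and `z̃_H ≤ e^{-2/(L+1)}`, then every `F ∈ F(μ, p_L)` has
`g_F(z̃_F) ≥ g_H(z̃_H)` (i.e. `ξ_F ≤ ξ_H`); moreover `H ∈ F(μ, p_L)`, so the supremum of
`ξ_F` over the class equals `ξ_H`. -/
theorem tail_does_not_determine_giant_stmt14
    (L : ℕ) (hL : 1 ≤ L) (p : ℕ → ℝ)
    (hp : ∀ i, 0 ≤ p i) (hplt : ∑ i ∈ Finset.Icc 1 L, p i < 1)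
    (μ : ℝ) (hμ : 0 < μ) (hκ : (L : ℝ) + 1 ≤ kappa L p μ)
    (H : DegreeDist) (hH : IsH L p μ H)
    (zH : ℝ) (hzH : IsSmallestRoot H (mu H) zH)
    (hcond : zH ≤ Real.exp (-(2 / ((L : ℝ) + 1)))) :
    (∀ F : DegreeDist, MemF L p F → mu F = μ →
      ∀ zF : ℝ, IsSmallestRoot F (mu F) zF → pgf H zH ≤ pgf F zF) ∧
    MemF L p H ∧ mu H = μ ∧
    sSup {x : ℝ | ∃ F : DegreeDist, MemF L p F ∧ mu F = μ ∧
        ∃ zF, IsSmallestRoot F (mu F) zF ∧ x = 1 - pgf F zF} =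
      1 - pgf H zH :=
  tail_does_not_determine_giant_stmt14_general L p hplt μ hκ H hH zH hzH hcond
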